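/- For Pauli matrices and any j ∈ {1, 3}: the quantity (δ_{j0} + δ_{j2})/2 equals 0, and consequently the two averaging formulas E_θ Tr[W A W† σⱼ] Tr[W C W† σⱼ] and E_θ Tr[G A W† σⱼ] Tr[G C W† σⱼ] (with W = I cosθ − iσ₂ sinθ, G = −I sinθ − iσ₂ cosθ, θ uniform on [0,2π]) are both equal to (1/2)Tr[Aσ₁]Tr[Cσ₁] + (1/2)Tr[Aσ₃]Tr[Cσ₃] when j = 3 — i.e., (1/(2π))∫₀^{2π} Tr[W A W† σ₃]Tr[W C W† σ₃] dθ = (1/(2π))∫₀^{2π} Tr[G A W† σ₃]Tr[G C W† σ₃] dθ for all 2×2 complex matrices A, C. -/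

import Mathlib

open Matrix Complex intervalIntegral

noncomputable def σ : Fin 4 → Matrix (Fin 2) (Fin 2) ℂ :=
  ![1, !![0, 1; 1, 0], !![0, -Complex.I; Complex.I, 0], !![1, 0; 0, -1]]

/-- The rotation `W(θ) = I cos θ - i σ₂ sin θ`. -/
noncomputable def W (θ : ℝ) : Matrix (Fin 2) (Fin 2) ℂ :=
  (Real.cos θ : ℂ) • (1 : Matrix (Fin 2) (Fin 2) ℂ)
    - (Complex.I * (Real.sin θ : ℂ)) • σ 2

/-- The derivative `G(θ) = W'(θ) = -I sin θ - i σ₂ cos θ`. -/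
noncomputable def G (θ : ℝ) : Matrix (Fin 2) (Fin 2) ℂ :=
  (-(Real.sin θ : ℂ)) • (1 : Matrix (Fin 2) (Fin 2) ℂ)
    - (Complex.I * (Real.cos θ : ℂ)) • σ 2


lemma Wmat (θ : ℝ) : W θ = !![(Real.cos θ : ℂ), -(Real.sin θ:ℂ); (Real.sin θ:ℂ), (Real.cos θ:ℂ)] := by
  ext i j; fin_cases i <;> fin_cases j <;>
    simp [W, σ, Matrix.one_apply, Complex.I_sq] <;> ring_nf <;> simp [Complex.I_sq]

lemma Gmat (θ : ℝ) : G θ = !![((-Real.sin θ : ℝ):ℂ), -((Real.cos θ:ℝ):ℂ); ((Real.cos θ:ℝ):ℂ), ((-Real.sin θ:ℝ):ℂ)] := by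
  ext i j; fin_cases i <;> fin_cases j <;>
    simp [G, σ, Matrix.one_apply, Complex.I_sq] <;> ring_nf <;> simp [Complex.I_sq]

lemma key (A : Matrix (Fin 2) (Fin 2) ℂ) (c s c' s' : ℝ) :
    (!![(c':ℂ), -(s':ℂ); (s':ℂ), (c':ℂ)] * A * !![(c:ℂ), -(s:ℂ); (s:ℂ), (c:ℂ)]ᴴ * σ 3).trace
      = ((c'*c - s'*s : ℝ):ℂ) * (A 0 0 - A 1 1) - ((c'*s + s'*c : ℝ):ℂ) * (A 0 1 + A 1 0) := by
  have hH : !![(c:ℂ), -(s:ℂ); (s:ℂ), (c:ℂ)]ᴴ = !![(c:ℂ), (s:ℂ); -(s:ℂ), (c:ℂ)] := by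
    ext i j; fin_cases i <;> fin_cases j <;>
      simp [Matrix.conjTranspose_apply, Complex.conj_ofReal]
  rw [hH, Matrix.eta_fin_two A]
  simp [σ, Matrix.trace_fin_two, Matrix.mul_fin_two]
  push_cast
  ring

lemma trA3 (A : Matrix (Fin 2) (Fin 2) ℂ) : (A * σ 3).trace = A 0 0 - A 1 1 := by
  rw [Matrix.eta_fin_two A]; simp [σ, Matrix.trace_fin_two, Matrix.mul_fin_two]; ring

lemma trA1 (A : Matrix (Fin 2) (Fin 2) ℂ) : (A * σ 1).trace = A 0 1 + A 1 0 := by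
  rw [Matrix.eta_fin_two A]; simp [σ, Matrix.trace_fin_two, Matrix.mul_fin_two]

lemma trW (A : Matrix (Fin 2) (Fin 2) ℂ) (θ : ℝ) :
    (W θ * A * (W θ)ᴴ * σ 3).trace =
      ((Real.cos (2*θ)):ℂ) * ((A * σ 3).trace) - ((Real.sin (2*θ)):ℂ) * ((A * σ 1).trace) := by
  rw [Wmat, key, trA3, trA1]
  have h1 : Real.cos θ * Real.cos θ - Real.sin θ * Real.sin θ = Real.cos (2*θ) := by
    rw [Real.cos_two_mul']; ring
  have h2 : Real.cos θ * Real.sin θ + Real.sin θ * Real.cos θ = Real.sin (2*θ) := by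
    rw [Real.sin_two_mul]; ring
  rw [h1, h2]

lemma trG (A : Matrix (Fin 2) (Fin 2) ℂ) (θ : ℝ) :
    (G θ * A * (W θ)ᴴ * σ 3).trace =
      (-(Real.sin (2*θ):ℂ)) * ((A * σ 3).trace) - ((Real.cos (2*θ)):ℂ) * ((A * σ 1).trace) := by
  rw [Wmat, Gmat, key A (Real.cos θ) (Real.sin θ) (-Real.sin θ) (Real.cos θ), trA3, trA1]
  have h1 : -Real.sin θ * Real.cos θ - Real.cos θ * Real.sin θ = -Real.sin (2*θ) := by
    rw [Real.sin_two_mul]; ring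
  have h2 : -Real.sin θ * Real.sin θ + Real.cos θ * Real.cos θ = Real.cos (2*θ) := by
    rw [Real.cos_two_mul']; ring
  rw [h1, h2]
  push_cast
  ring

lemma s4 : Real.sin (4 * Real.pi) = 0 := by
  have := Real.sin_nat_mul_pi 4; norm_num at this; linarith [this]

lemma Icc : ∫ x in (0:ℝ)..(2*Real.pi), Real.cos (2*x)^2 = Real.pi := by
  rw [intervalIntegral.integral_comp_mul_left (fun x => Real.cos x ^ 2) two_ne_zero, mul_zero,
    show (2:ℝ)*(2*Real.pi) = 4*Real.pi by ring, integral_cos_sq, s4]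
  simp
  ring

lemma Iss : ∫ x in (0:ℝ)..(2*Real.pi), Real.sin (2*x)^2 = Real.pi := by
  rw [intervalIntegral.integral_comp_mul_left (fun x => Real.sin x ^ 2) two_ne_zero, mul_zero,
    show (2:ℝ)*(2*Real.pi) = 4*Real.pi by ring, integral_sin_sq, s4]
  simp
  ring

lemma Isc : ∫ x in (0:ℝ)..(2*Real.pi), Real.sin (2*x) * Real.cos (2*x) = 0 := by
  rw [intervalIntegral.integral_comp_mul_left (fun x => Real.sin x * Real.cos x) two_ne_zero, mul_zero,
    show (2:ℝ)*(2*Real.pi) = 4*Real.pi by ring, integral_sin_mul_cos₁, s4]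
  simp

theorem avg_WAW_eq_avg_GAW_sigma3 (A C : Matrix (Fin 2) (Fin 2) ℂ) :
    (1 / (2 * Real.pi) : ℂ) *
        (∫ θ in (0:ℝ)..(2 * Real.pi),
          (W θ * A * (W θ)ᴴ * σ 3).trace * (W θ * C * (W θ)ᴴ * σ 3).trace)
      = (1 / (2 * Real.pi) : ℂ) *
        (∫ θ in (0:ℝ)..(2 * Real.pi),
          (G θ * A * (W θ)ᴴ * σ 3).trace * (G θ * C * (W θ)ᴴ * σ 3).trace) ∧
    (1 / (2 * Real.pi) : ℂ) *
        (∫ θ in (0:ℝ)..(2 * Real.pi),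
          (W θ * A * (W θ)ᴴ * σ 3).trace * (W θ * C * (W θ)ᴴ * σ 3).trace)
      = (1 / 2) * ((A * σ 1).trace * (C * σ 1).trace)
        + (1 / 2) * ((A * σ 3).trace * (C * σ 3).trace) := by
  set a1 := (A * σ 1).trace with ha1
  set a3 := (A * σ 3).trace with ha3
  set c1 := (C * σ 1).trace with hc1
  set c3 := (C * σ 3).trace with hc3
  have i1 : ∀ k : ℂ, IntervalIntegrable (fun θ : ℝ => (Real.cos (2*θ)^2) • k)
      MeasureTheory.volume 0 (2*Real.pi) := fun k =>
    (Continuous.smul (by continuity : Continuous fun θ : ℝ => Real.cos (2*θ)^2) continuous_const).intervalIntegrable _ _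
  have i2 : ∀ k : ℂ, IntervalIntegrable (fun θ : ℝ => (Real.sin (2*θ)^2) • k)
      MeasureTheory.volume 0 (2*Real.pi) := fun k =>
    (Continuous.smul (by continuity : Continuous fun θ : ℝ => Real.sin (2*θ)^2) continuous_const).intervalIntegrable _ _
  have i3 : ∀ k : ℂ, IntervalIntegrable (fun θ : ℝ => (Real.sin (2*θ) * Real.cos (2*θ)) • k)
      MeasureTheory.volume 0 (2*Real.pi) := fun k =>
    (Continuous.smul (by continuity : Continuous fun θ : ℝ => Real.sin (2*θ) * Real.cos (2*θ)) continuous_const).intervalIntegrable _ _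
  have hWint : (∫ θ in (0:ℝ)..(2 * Real.pi),
      (W θ * A * (W θ)ᴴ * σ 3).trace * (W θ * C * (W θ)ᴴ * σ 3).trace)
      = (Real.pi : ℂ) * (a1*c1 + a3*c3) := by
    have e : ∀ θ : ℝ, (W θ * A * (W θ)ᴴ * σ 3).trace * (W θ * C * (W θ)ᴴ * σ 3).trace
        = (Real.cos (2*θ)^2) • (a3*c3) + (Real.sin (2*θ)^2) • (a1*c1)
          + (Real.sin (2*θ) * Real.cos (2*θ)) • (-(a3*c1) - a1*c3) := by
      intro θ
      rw [trW, trW, ← ha1, ← ha3, ← hc1, ← hc3]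
      simp only [Complex.real_smul]
      push_cast
      ring
    rw [intervalIntegral.integral_congr (g := fun θ : ℝ =>
        (Real.cos (2*θ)^2) • (a3*c3) + (Real.sin (2*θ)^2) • (a1*c1)
          + (Real.sin (2*θ) * Real.cos (2*θ)) • (-(a3*c1) - a1*c3)) (fun θ _ => e θ)]
    rw [intervalIntegral.integral_add ((i1 _).add (i2 _)) (i3 _),
      intervalIntegral.integral_add (i1 _) (i2 _),
      intervalIntegral.integral_smul_const, intervalIntegral.integral_smul_const,
      intervalIntegral.integral_smul_const, Icc, Iss, Isc]
    simp only [Complex.real_smul, zero_smul, add_zero]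
    push_cast
    ring
  have hGint : (∫ θ in (0:ℝ)..(2 * Real.pi),
      (G θ * A * (W θ)ᴴ * σ 3).trace * (G θ * C * (W θ)ᴴ * σ 3).trace)
      = (Real.pi : ℂ) * (a1*c1 + a3*c3) := by
    have e : ∀ θ : ℝ, (G θ * A * (W θ)ᴴ * σ 3).trace * (G θ * C * (W θ)ᴴ * σ 3).trace
        = (Real.sin (2*θ)^2) • (a3*c3) + (Real.cos (2*θ)^2) • (a1*c1)
          + (Real.sin (2*θ) * Real.cos (2*θ)) • ((a3*c1) + a1*c3) := by
      intro θ
      rw [trG, trG, ← ha1, ← ha3, ← hc1, ← hc3]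
      simp only [Complex.real_smul]
      push_cast
      ring
    rw [intervalIntegral.integral_congr (g := fun θ : ℝ =>
        (Real.sin (2*θ)^2) • (a3*c3) + (Real.cos (2*θ)^2) • (a1*c1)
          + (Real.sin (2*θ) * Real.cos (2*θ)) • ((a3*c1) + a1*c3)) (fun θ _ => e θ)]
    rw [intervalIntegral.integral_add ((i2 _).add (i1 _)) (i3 _),
      intervalIntegral.integral_add (i2 _) (i1 _),
      intervalIntegral.integral_smul_const, intervalIntegral.integral_smul_const,
      intervalIntegral.integral_smul_const, Icc, Iss, Isc]
    simp only [Complex.real_smul, zero_smul, add_zero]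
    push_cast
    ring
  rw [hWint, hGint]
  have hπ : (Real.pi : ℂ) ≠ 0 := by
    exact_mod_cast Complex.ofReal_ne_zero.mpr Real.pi_ne_zero
  refine ⟨rfl, ?_⟩
  field_simp
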